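/- arXiv:1803.05269 — 5 statements merged into one kernel-verified Lean document; each statement's English description precedes it below -/
import Mathlib

section
/- Let 𝒯 = 𝒳 ⊥ 𝒴 and 𝒯 = 𝒳′ ⊥ 𝒴′ be two semi-orthogonal decompositions of a triangulated category 𝒯 such that 𝒳 ⊆ 𝒳′ and 𝒴′ ⊆ 𝒴, and assume 𝒳′ is a thick subcategory of 𝒯. Then 𝒯 = 𝒳 ⊥ (𝒴 ∩ 𝒳′) ⊥ 𝒴′; that is: every object of 𝒯 belongs to 𝒳 * (𝒴 ∩ 𝒳′) * 𝒴′, and Hom_𝒯(A, B) = 0 whenever A ∈ 𝒳 and B ∈ 𝒴 ∩ 𝒳′, or A ∈ 𝒳 and B ∈ 𝒴′, or A ∈ 𝒴 ∩ 𝒳′ and B ∈ 𝒴′. -/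
/-! Decompose an object by `𝒳' ⊥ 𝒴'` and then its `𝒳'`-part by `𝒳 ⊥ 𝒴`. The `𝒴`-part `Y` of
the latter triangle `X → X' → Y → X⟦1⟧` lies in `𝒳'` as well, since `𝒳'` is thick and contains
`X` and `X'`. The orthogonality conditions are inherited from the two given decompositions. -/

open CategoryTheory Limits Pretriangulated

universe v u

variable {C : Type u} [Category.{v} C] [Preadditive C] [HasZeroObject C]
  [HasShift C ℤ] [∀ n : ℤ, (shiftFunctor C n).Additive] [Pretriangulated C]

/-- `Z ∈ 𝒳 * 𝒴`: there is a distinguished triangle `X ⟶ Z ⟶ Y ⟶ X⟦1⟧` with `X ∈ 𝒳`, `Y ∈ 𝒴`. -/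
def memStar (𝒳 𝒴 : Set C) (Z : C) : Prop :=
  ∃ (X Y : C) (f : X ⟶ Z) (g : Z ⟶ Y) (h : Y ⟶ X⟦(1 : ℤ)⟧),
    X ∈ 𝒳 ∧ Y ∈ 𝒴 ∧ Triangle.mk f g h ∈ distTriang C

/-- `𝒯 = 𝒳 ⊥ 𝒴` is a semi-orthogonal decomposition: every object of `𝒯` lies in `𝒳 * 𝒴`
and there are no nonzero morphisms from objects of `𝒳` to objects of `𝒴`. -/
def IsSOD (𝒳 𝒴 : Set C) : Prop :=
  (∀ Z : C, memStar 𝒳 𝒴 Z) ∧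
  (∀ X Y : C, X ∈ 𝒳 → Y ∈ 𝒴 → ∀ f : X ⟶ Y, f = 0)

/-- A thick subcategory: closed under isomorphisms, shifts in both directions,
extensions, and direct summands. -/
structure IsThick (𝒵 : Set C) : Prop where
  mem_of_iso : ∀ {A B : C}, (A ≅ B) → A ∈ 𝒵 → B ∈ 𝒵
  shift_mem : ∀ (A : C) (n : ℤ), A ∈ 𝒵 → (A⟦n⟧ : C) ∈ 𝒵
  ext₂ : ∀ (T : Triangle C), T ∈ (distTriang C) → T.obj₁ ∈ 𝒵 → T.obj₃ ∈ 𝒵 → T.obj₂ ∈ 𝒵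
  mem_of_summand : ∀ (A B : C), (∃ (i : A ⟶ B) (r : B ⟶ A), i ≫ r = 𝟙 A) → B ∈ 𝒵 → A ∈ 𝒵

theorem memStar_mono {𝒳 𝒴 𝒳₂ 𝒴₂ : Set C} (h𝒳 : 𝒳 ⊆ 𝒳₂) (h𝒴 : 𝒴 ⊆ 𝒴₂) {Z : C}
    (hZ : memStar 𝒳 𝒴 Z) : memStar 𝒳₂ 𝒴₂ Z := by
  obtain ⟨X, Y, f, g, h, hX, hY, hT⟩ := hZ
  exact ⟨X, Y, f, g, h, h𝒳 hX, h𝒴 hY, hT⟩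

theorem IsThick.obj₃_mem {𝒵 : Set C} (h𝒵 : IsThick 𝒵) {T : Triangle C}
    (hT : T ∈ distTriang C) (h₁ : T.obj₁ ∈ 𝒵) (h₂ : T.obj₂ ∈ 𝒵) : T.obj₃ ∈ 𝒵 :=
  h𝒵.ext₂ _ (rot_of_distTriang _ hT) h₂ (h𝒵.shift_mem _ 1 h₁)

theorem IsSOD.memStar_inter_of_mem {𝒳 𝒴 𝒳' : Set C} (hSOD : IsSOD 𝒳 𝒴) (h𝒳𝒳' : 𝒳 ⊆ 𝒳')
    (h𝒳' : IsThick 𝒳') {Z : C} (hZ : Z ∈ 𝒳') : memStar 𝒳 (𝒴 ∩ 𝒳') Z := by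
  obtain ⟨X, Y, f, g, h, hX, hY, hT⟩ := hSOD.1 Z
  exact ⟨X, Y, f, g, h, hX, ⟨hY, h𝒳'.obj₃_mem hT (h𝒳𝒳' hX) hZ⟩, hT⟩

theorem modular_c_general (𝒳 𝒴 𝒳' 𝒴' : Set C)
    (hSOD : IsSOD 𝒳 𝒴) (hSOD' : IsSOD 𝒳' 𝒴')
    (h𝒳𝒳' : 𝒳 ⊆ 𝒳') (h𝒴'𝒴 : 𝒴' ⊆ 𝒴) (h𝒳' : IsThick 𝒳') :
    (∀ Z : C, Z ∈ setOf (memStar (setOf (memStar 𝒳 (𝒴 ∩ 𝒳'))) 𝒴')) ∧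
    (∀ A B : C, A ∈ 𝒳 → B ∈ 𝒴 ∩ 𝒳' → ∀ f : A ⟶ B, f = 0) ∧
    (∀ A B : C, A ∈ 𝒳 → B ∈ 𝒴' → ∀ f : A ⟶ B, f = 0) ∧
    (∀ A B : C, A ∈ 𝒴 ∩ 𝒳' → B ∈ 𝒴' → ∀ f : A ⟶ B, f = 0) :=
  ⟨fun Z => memStar_mono (fun _ hZ => hSOD.memStar_inter_of_mem h𝒳𝒳' h𝒳' hZ) le_rfl (hSOD'.1 Z),
    fun A B hA hB => hSOD.2 A B hA hB.1,
    fun A B hA hB => hSOD.2 A B hA (h𝒴'𝒴 hB),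
    fun A B hA hB => hSOD'.2 A B hA.2 hB⟩

/-- Lemma "modular" (c): given semi-orthogonal decompositions `𝒯 = 𝒳 ⊥ 𝒴` and `𝒯 = 𝒳' ⊥ 𝒴'`
with `𝒳 ⊆ 𝒳'` (equivalently `𝒴' ⊆ 𝒴`), where `𝒳'` is thick, there is a semi-orthogonal
decomposition `𝒯 = 𝒳 ⊥ (𝒴 ∩ 𝒳') ⊥ 𝒴'`. -/
theorem modular_c (𝒳 𝒴 𝒳' 𝒴' : Set C)
    (h𝒳iso : ∀ {A B : C}, (A ≅ B) → A ∈ 𝒳 → B ∈ 𝒳)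
    (h𝒴iso : ∀ {A B : C}, (A ≅ B) → A ∈ 𝒴 → B ∈ 𝒴)
    (h𝒳'iso : ∀ {A B : C}, (A ≅ B) → A ∈ 𝒳' → B ∈ 𝒳')
    (h𝒴'iso : ∀ {A B : C}, (A ≅ B) → A ∈ 𝒴' → B ∈ 𝒴')
    (hSOD : IsSOD 𝒳 𝒴) (hSOD' : IsSOD 𝒳' 𝒴')
    (h𝒳𝒳' : 𝒳 ⊆ 𝒳') (h𝒴'𝒴 : 𝒴' ⊆ 𝒴) (h𝒳' : IsThick 𝒳') :
    (∀ Z : C, Z ∈ setOf (memStar (setOf (memStar 𝒳 (𝒴 ∩ 𝒳'))) 𝒴')) ∧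
    (∀ A B : C, A ∈ 𝒳 → B ∈ 𝒴 ∩ 𝒳' → ∀ f : A ⟶ B, f = 0) ∧
    (∀ A B : C, A ∈ 𝒳 → B ∈ 𝒴' → ∀ f : A ⟶ B, f = 0) ∧
    (∀ A B : C, A ∈ 𝒴 ∩ 𝒳' → B ∈ 𝒴' → ∀ f : A ⟶ B, f = 0) :=
  modular_c_general 𝒳 𝒴 𝒳' 𝒴' hSOD hSOD' h𝒳𝒳' h𝒴'𝒴 h𝒳'
end

section
/- If r ∈ R is a homogeneous non-zero-divisor of positive degree, then K = R[r^{-1}]: every homogeneous non-zero-divisor of R maps to a unit in the localization of R away from r, and consequently the canonical ring homomorphism from the localization of R at the submonoid of powers of r to the graded total quotient ring K is an isomorphism. -/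
open CategoryTheory

universe u

/-- A commutative ring `R` is Gorenstein in the sense that it has finite injective dimension
as a module over itself: there is `n : ℕ` such that `Ext^i_R(M, R) = 0` for all `R`-modules
`M` and all `i > n`. -/
def HasFiniteSelfInjDim (R : Type u) [CommRing R] : Prop :=
  ∃ n : ℕ, ∀ (M : ModuleCat.{u} R) (i : ℕ), n < i →
    Subsingleton (((Ext R (ModuleCat.{u} R) i).obj (Opposite.op M)).obj (ModuleCat.of R R))

/-- The multiplicative submonoid of homogeneous non-zero-divisors of a graded ring. -/
def homNZD {R : Type u} [CommRing R] (𝒜 : ℤ → AddSubgroup R) [GradedRing 𝒜] : Submonoid R :=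
  SetLike.homogeneousSubmonoid 𝒜 ⊓ nonZeroDivisors R

/-!
A homogeneous prime `P` containing a non-zero-divisor `s` is not minimal, so in dimension one it
is maximal. Since the grading has no negative part, `P + (r)` is still proper (its degree-zero
part is that of `P`), hence equals `P`, i.e. `r ∈ P`. Applied to the homogeneous cores of all
primes containing `s`, this puts `r` in the radical of `(s)`, so `s` divides a power of `r`
and inverting `r` already inverts every homogeneous non-zero-divisor.
-/

lemma Ideal.IsPrime.isMaximal_of_mem_nonZeroDivisors {R : Type*} [CommRing R]
    [Ring.KrullDimLE 1 R] {P : Ideal R} (hP : P.IsPrime) {s : R} (hsP : s ∈ P)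
    (hs : s ∈ nonZeroDivisors R) : P.IsMaximal :=
  (Ring.krullDimLE_one_iff.mp ‹_› P hP).resolve_left
    fun hmin => notMem_nonZeroDivisors_of_mem_mem_minimalPrimes hsP hmin hs

section NonnegativeGrading

variable {R : Type*} [CommRing R] {𝒜 : ℤ → AddSubgroup R} [GradedRing 𝒜]

lemma Ideal.IsHomogeneous.sup_span_singleton_ne_top (hneg : ∀ i < 0, 𝒜 i = ⊥)
    {I : Ideal R} (hI : I.IsHomogeneous 𝒜) (hI_ne_top : I ≠ ⊤)
    {r : R} {d : ℤ} (hd : 0 < d) (hrd : r ∈ 𝒜 d) : I ⊔ Ideal.span {r} ≠ ⊤ := by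
  intro htop
  obtain ⟨x, hx, _, hz, hxz⟩ := Submodule.mem_sup.mp (htop ▸ Submodule.mem_top : (1 : R) ∈ _)
  obtain ⟨y, rfl⟩ := Ideal.mem_span_singleton'.mp hz
  have hyr : (DirectSum.decompose 𝒜 (y * r) 0 : R) = 0 := by
    rw [show (0 : ℤ) = -d + d by ring, DirectSum.coe_decompose_mul_add_of_right_mem 𝒜 hrd]
    have hzero : ∀ w ∈ 𝒜 (-d), w = 0 := fun w hw => by
      rwa [hneg (-d) (by omega), AddSubgroup.mem_bot] at hw
    rw [hzero _ (SetLike.coe_mem _), zero_mul]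
  have h1 : (DirectSum.decompose 𝒜 x 0 : R) = 1 := by
    have h := congrArg (fun w => (DirectSum.decompose 𝒜 w 0 : R)) hxz
    simp only [DirectSum.decompose_add, DirectSum.add_apply, AddSubgroup.coe_add] at h
    rwa [hyr, add_zero, DirectSum.decompose_of_mem_same 𝒜 (SetLike.one_mem_graded 𝒜)] at h
  exact hI_ne_top ((Ideal.eq_top_iff_one I).mpr (h1 ▸ hI 0 hx))

lemma Ideal.IsHomogeneous.mem_of_isMaximal (hneg : ∀ i < 0, 𝒜 i = ⊥)
    {m : Ideal R} (hm_hom : m.IsHomogeneous 𝒜) (hm : m.IsMaximal)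
    {r : R} {d : ℤ} (hd : 0 < d) (hrd : r ∈ 𝒜 d) : r ∈ m := by
  have hsup : m = m ⊔ Ideal.span {r} :=
    hm.eq_of_le (hm_hom.sup_span_singleton_ne_top hneg hm.ne_top hd hrd) le_sup_left
  exact hsup ▸ Ideal.mem_sup_right (Ideal.mem_span_singleton_self r)

lemma mem_radical_span_singleton_of_isHomogeneousElem [Ring.KrullDimLE 1 R]
    (hneg : ∀ i < 0, 𝒜 i = ⊥) {r : R} {d : ℤ} (hd : 0 < d) (hrd : r ∈ 𝒜 d)
    {s : R} (hs_hom : SetLike.IsHomogeneousElem 𝒜 s) (hs : s ∈ nonZeroDivisors R) :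
    r ∈ (Ideal.span {s}).radical := by
  rw [Ideal.radical_eq_sInf, Submodule.mem_sInf]
  rintro p ⟨hsp, hp⟩
  let P := (Ideal.homogeneousCore 𝒜 p).toIdeal
  have hsP : s ∈ P := Ideal.mem_homogeneousCore_of_homogeneous_of_mem hs_hom
    (hsp (Ideal.mem_span_singleton_self s))
  have hP_max : P.IsMaximal := hp.homogeneousCore.isMaximal_of_mem_nonZeroDivisors hsP hs
  exact Ideal.toIdeal_homogeneousCore_le 𝒜 p <|
    (Ideal.homogeneousCore 𝒜 p).isHomogeneous.mem_of_isMaximal hneg hP_max hd hrd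

lemma exists_dvd_pow_of_isHomogeneousElem [Ring.KrullDimLE 1 R]
    (hneg : ∀ i < 0, 𝒜 i = ⊥) {r : R} {d : ℤ} (hd : 0 < d) (hrd : r ∈ 𝒜 d)
    {s : R} (hs_hom : SetLike.IsHomogeneousElem 𝒜 s) (hs : s ∈ nonZeroDivisors R) :
    ∃ n : ℕ, s ∣ r ^ n := by
  obtain ⟨n, hn⟩ := mem_radical_span_singleton_of_isHomogeneousElem hneg hd hrd hs_hom hs
  exact ⟨n, Ideal.mem_span_singleton.mp hn⟩

end NonnegativeGrading

/-- If `r` is a homogeneous non-zero-divisor of positive degree in a `ℤ`-graded Gorenstein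
ring of Krull dimension one with `R_i = 0` for `i < 0` and `R_0` a field, then every
homogeneous non-zero-divisor of `R` becomes a unit in `R[r⁻¹]`, and the canonical ring
homomorphism from `R[r⁻¹]` to the graded total quotient ring
`K = (homogeneous non-zero-divisors)⁻¹ R` is an isomorphism. -/
theorem graded_total_quotient_eq_inverting_r
    (R : Type u) [CommRing R]
    (𝒜 : ℤ → AddSubgroup R) [GradedRing 𝒜]
    (hneg : ∀ i < 0, 𝒜 i = ⊥)
    (hdim : ringKrullDim R = 1)
    (r : R) (d : ℤ) (hd : 0 < d) (hrd : r ∈ 𝒜 d) (hr : r ∈ nonZeroDivisors R) :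
    (∀ s : R, SetLike.IsHomogeneousElem 𝒜 s → s ∈ nonZeroDivisors R →
      IsUnit (algebraMap R (Localization (Submonoid.powers r)) s)) ∧
    Function.Bijective
      (IsLocalization.map (M := Submonoid.powers r) (T := homNZD 𝒜)
        (Localization (homNZD 𝒜)) (RingHom.id R)
        (fun x hx => by
          obtain ⟨n, rfl⟩ := hx
          exact pow_mem (⟨⟨d, hrd⟩, hr⟩ : r ∈ homNZD 𝒜) n) :
        Localization (Submonoid.powers r) →+* Localization (homNZD 𝒜)) := by
  have : Ring.KrullDimLE 1 R := Ring.krullDimLE_iff.mpr hdim.le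
  have hle : Submonoid.powers r ≤ homNZD 𝒜 :=
    Submonoid.powers_le.mpr (⟨⟨d, hrd⟩, hr⟩ : r ∈ homNZD 𝒜)
  have : IsLocalization (homNZD 𝒜) (Localization (Submonoid.powers r)) := by
    refine IsLocalization.of_le_of_exists_dvd _ _ hle fun s ⟨hs_hom, hs⟩ => ?_
    obtain ⟨n, hn⟩ := exists_dvd_pow_of_isHomogeneousElem hneg hd hrd hs_hom hs
    exact ⟨r ^ n, ⟨n, rfl⟩, hn⟩
  refine ⟨fun s hs_hom hs => IsLocalization.map_units _ (⟨s, hs_hom, hs⟩ : homNZD 𝒜), ?_⟩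
  exact IsLocalization.bijective (homNZD 𝒜) _
    ((IsLocalization.map_comp _).trans (RingHom.comp_id _))
end

section
/- Let X be a finitely generated ℤ-graded R-module, i.e. X carries a direct sum decomposition X = ⊕_{i∈ℤ} X_i into additive subgroups with R_i · X_j ⊆ X_{i+j} for all i, j. Then every minimal element (with respect to inclusion) of the non-projective locus NP(X) = { 𝔭 ∈ Spec R | the localization X_𝔭 is not a projective R_𝔭-module } is a homogeneous (graded) prime ideal of R. -/
/-! For a surjection `π : F → X` from a projective module, let `I` be the ideal of those `r` for
which `r • id_X` factors through `π`. A splitting of `r • id_X` with `r ∉ 𝔭` makes `X_𝔭` a direct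
summand of `F_𝔭`; conversely, if `X` is finitely presented, a splitting of `π_𝔭` descends to one of
some `r • id_X` with `r ∉ 𝔭`. Hence `NP(X) = V(I)`, and its minimal elements are the minimal primes
over `I`. When `F` is free on homogeneous generators of `X`, the degree-`j` components of a
splitting of `r • id_X` split `r_j • id_X`, so `I` is homogeneous; and a minimal prime over a
homogeneous ideal equals its homogeneous core, which is prime. -/

open CategoryTheory

universe u

/-- The non-projective locus of an `R`-module `X`: the set of primes `𝔭` such that the
localization `X_𝔭` is not projective over `R_𝔭`. -/
def nonProjLocus (R : Type u) [CommRing R] (X : Type u) [AddCommGroup X] [Module R X] :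
    Set (Ideal R) :=
  {p : Ideal R | ∃ hp : p.IsPrime,
    letI := hp
    ¬ Module.Projective (Localization.AtPrime p) (LocalizedModule p.primeCompl X)}

open DirectSum

section GradedSMul

variable {ι R X : Type*} [DecidableEq ι] [AddCommGroup ι] [Ring R] [AddCommGroup X] [Module R X]
  {𝒜 : ι → AddSubgroup R} {ℳ : ι → AddSubgroup X} [Decomposition ℳ] [SetLike.GradedSMul 𝒜 ℳ]

theorem DirectSum.coe_decompose_smul_add_of_left_mem {i : ι} {a : R} (ha : a ∈ 𝒜 i) (m : X)
    (n : ι) : (decompose ℳ (a • m) (i + n) : X) = a • (decompose ℳ m n : X) := by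
  induction m using Decomposition.inductionOn ℳ with
  | zero => simp
  | @homogeneous j m =>
    have ham : a • (m : X) ∈ ℳ (i + j) := SetLike.GradedSMul.smul_mem ha m.2
    by_cases h : j = n
    · subst h
      rw [decompose_of_mem_same ℳ ham, decompose_coe, of_eq_same]
    · rw [decompose_of_mem_ne ℳ ham (by simpa using h), decompose_of_mem_ne ℳ m.2 h, smul_zero]
  | add m m' h h' => simp only [smul_add, decompose_add, add_apply, AddSubgroup.coe_add, h, h']

variable (𝒜) [GradedRing 𝒜]

theorem DirectSum.coe_decompose_smul_of_right_mem {i : ι} {m : X} (hm : m ∈ ℳ i) (a : R)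
    (n : ι) : (decompose ℳ (a • m) n : X) = (decompose 𝒜 a (n - i) : R) • m := by
  induction a using Decomposition.inductionOn 𝒜 with
  | zero => simp
  | @homogeneous j a =>
    have ham : (a : R) • m ∈ ℳ (j + i) := SetLike.GradedSMul.smul_mem a.2 hm
    by_cases h : j + i = n
    · subst h
      rw [decompose_of_mem_same ℳ ham, add_sub_cancel_right, decompose_coe, of_eq_same]
    · rw [decompose_of_mem_ne ℳ ham h,
        decompose_of_mem_ne 𝒜 a.2 (by rintro rfl; exact h (sub_add_cancel n i)), zero_smul]
  | add a a' h h' => simp only [add_smul, decompose_add, add_apply, AddSubgroup.coe_add, h, h']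

end GradedSMul

section AddMonoidHom

variable {ι X N : Type*} [DecidableEq ι] [AddCommGroup X] [AddCommGroup N]
  (ℳ : ι → AddSubgroup X) [Decomposition ℳ] (𝒩 : ι → AddSubgroup N) [Decomposition 𝒩]

noncomputable def AddMonoidHom.gradedComponent [Add ι] (f : X →+ N) (c : ι) : X →+ N :=
  (toAddMonoid fun e ↦ ((𝒩 (e + c)).subtype.comp (DFinsupp.evalAddMonoidHom (e + c))).comp
      ((decomposeAddEquiv 𝒩).toAddMonoidHom.comp (f.comp (ℳ e).subtype))).comp
    (decomposeAddEquiv ℳ).toAddMonoidHom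

theorem AddMonoidHom.gradedComponent_apply_of_mem [Add ι] (f : X →+ N) (c : ι) {e : ι} {x : X}
    (hx : x ∈ ℳ e) : f.gradedComponent ℳ 𝒩 c x = decompose 𝒩 (f x) (e + c) := by
  simp only [gradedComponent, AddEquiv.toAddMonoidHom_eq_coe, coe_comp, coe_coe,
    Function.comp_apply, decomposeAddEquiv_apply, decompose_of_mem ℳ hx, toAddMonoid_of,
    AddSubgroup.coe_subtype, SetLike.coe_eq_coe]
  rfl

end AddMonoidHom

section LinearMap

variable {ι R X N : Type*} [DecidableEq ι] [AddCommGroup ι] [Ring R] [AddCommGroup X] [Module R X]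
  [AddCommGroup N] [Module R N] (𝒜 : ι → AddSubgroup R) [GradedRing 𝒜]
  (ℳ : ι → AddSubgroup X) [Decomposition ℳ] [SetLike.GradedSMul 𝒜 ℳ]
  (𝒩 : ι → AddSubgroup N) [Decomposition 𝒩] [SetLike.GradedSMul 𝒜 𝒩]

noncomputable def LinearMap.gradedComponent (f : X →ₗ[R] N) (c : ι) : X →ₗ[R] N where
  __ := f.toAddMonoidHom.gradedComponent ℳ 𝒩 c
  map_smul' a x := by
    change f.toAddMonoidHom.gradedComponent ℳ 𝒩 c (a • x) =
      a • f.toAddMonoidHom.gradedComponent ℳ 𝒩 c x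
    induction x using Decomposition.inductionOn ℳ with
    | zero => simp
    | @homogeneous e x =>
      induction a using Decomposition.inductionOn 𝒜 with
      | zero => simp
      | @homogeneous b a =>
        have hax : (a : R) • x.1 ∈ ℳ (b + e) := SetLike.GradedSMul.smul_mem a.2 x.2
        rw [AddMonoidHom.gradedComponent_apply_of_mem ℳ 𝒩 _ _ hax,
          AddMonoidHom.gradedComponent_apply_of_mem ℳ 𝒩 _ _ x.2, LinearMap.toAddMonoidHom_coe,
          map_smul, add_assoc, coe_decompose_smul_add_of_left_mem a.2]
      | add a a' h h' => rw [add_smul, map_add, h, h', add_smul]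
    | add x x' h h' => rw [smul_add, map_add, h, h', map_add, smul_add]

theorem LinearMap.gradedComponent_apply_of_mem (f : X →ₗ[R] N) (c : ι) {e : ι} {x : X}
    (hx : x ∈ ℳ e) : f.gradedComponent 𝒜 ℳ 𝒩 c x = decompose 𝒩 (f x) (e + c) :=
  f.toAddMonoidHom.gradedComponent_apply_of_mem ℳ 𝒩 c hx

end LinearMap

theorem exists_finset_isHomogeneousElem_span_eq_top {ι R X σ : Type*} [DecidableEq ι]
    [Semiring R] [AddCommMonoid X] [Module R X] [Module.Finite R X] [SetLike σ X]
    [AddSubmonoidClass σ X] (ℳ : ι → σ) [Decomposition ℳ] :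
    ∃ t : Finset X, (∀ x ∈ t, SetLike.IsHomogeneousElem ℳ x) ∧
      Submodule.span R (t : Set X) = ⊤ := by
  classical
  obtain ⟨S, hS⟩ := Module.Finite.fg_top (R := R) (M := X)
  refine ⟨S.biUnion fun y ↦ (decompose ℳ y).support.image fun e ↦ (decompose ℳ y e : X),
    fun z hz ↦ ?_, ?_⟩
  · obtain ⟨y, -, e, -, rfl⟩ :
        ∃ y ∈ S, ∃ e ∈ (decompose ℳ y).support, (decompose ℳ y e : X) = z := by
      simpa using hz
    exact ⟨e, (decompose ℳ y e).2⟩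
  · rw [eq_top_iff, ← hS, Submodule.span_le]
    intro y hy
    rw [← sum_support_decompose ℳ y]
    exact Submodule.sum_mem _ fun e he ↦ Submodule.subset_span <|
      Finset.mem_biUnion.mpr ⟨y, hy, Finset.mem_image_of_mem _ he⟩

theorem Ideal.IsHomogeneous.of_isMinimalPrime {ι A σ : Type*} [CommRing A] [AddCommMonoid ι]
    [LinearOrder ι] [IsOrderedCancelAddMonoid ι] [SetLike σ A] [AddSubmonoidClass σ A]
    {𝒜 : ι → σ} [GradedRing 𝒜] {I p : Ideal A} (hI : I.IsHomogeneous 𝒜)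
    (hp : I.IsMinimalPrime p) : p.IsHomogeneous 𝒜 := by
  have hcore : (p.homogeneousCore 𝒜).toIdeal = p := by
    refine Minimal.eq_of_le hp ⟨hp.isPrime.homogeneousCore, ?_⟩
      (Ideal.toIdeal_homogeneousCore_le 𝒜 p)
    exact hI.toIdeal_homogeneousCore_eq_self ▸ Ideal.homogeneousCore_mono 𝒜 hp.le
  exact hcore ▸ (p.homogeneousCore 𝒜).isHomogeneous

section SplittingIdeal

variable {R F X : Type*} [CommRing R] [AddCommGroup F] [Module R F] [AddCommGroup X] [Module R X]

def LinearMap.splittingIdeal (π : F →ₗ[R] X) : Ideal R :=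
  (LinearMap.range (π.compRight (M := X) R)).comap (Algebra.linearMap R (Module.End R X))

theorem LinearMap.mem_splittingIdeal {π : F →ₗ[R] X} {r : R} :
    r ∈ π.splittingIdeal ↔ ∃ s : X →ₗ[R] F, π ∘ₗ s = r • LinearMap.id := by
  simp [splittingIdeal, Module.algebraMap_end_eq_smul_id]

theorem LinearMap.projective_localizedModule_of_mem_splittingIdeal [Module.Projective R F]
    (π : F →ₗ[R] X) {S : Submonoid R} {r : R} (hr : r ∈ π.splittingIdeal) (hrS : r ∈ S) :
    Module.Projective (Localization S) (LocalizedModule S X) := by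
  obtain ⟨s, hs⟩ := mem_splittingIdeal.mp hr
  have hunit : IsUnit (algebraMap R (Localization S) r) := IsLocalization.map_units _ ⟨r, hrS⟩
  refine Module.Projective.of_split (M := LocalizedModule S F)
    ((hunit.unit⁻¹ : (Localization S)ˣ) • LocalizedModule.map S s) (LocalizedModule.map S π) ?_
  ext z
  induction z using LocalizedModule.induction_on with
  | h x t =>
    have hx : π (s x) = r • x := congr($hs x)
    rw [LinearMap.comp_apply, LinearMap.smul_apply, Units.smul_def, map_smul,
      LocalizedModule.map_mk, LocalizedModule.map_mk, hx, ← LocalizedModule.smul'_mk,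
      ← algebraMap_smul (Localization S) r, smul_smul, IsUnit.val_inv_mul, one_smul,
      LinearMap.id_apply]

theorem LinearMap.exists_mem_splittingIdeal_of_projective [Module.FinitePresentation R X]
    (π : F →ₗ[R] X) (hπ : Function.Surjective π) (S : Submonoid R)
    [Module.Projective (Localization S) (LocalizedModule S X)] :
    ∃ r ∈ S, r ∈ π.splittingIdeal := by
  obtain ⟨σ, hσ⟩ := Module.projective_lifting_property (LocalizedModule.map S π) LinearMap.id
    (LocalizedModule.map_surjective S π hπ)
  obtain ⟨h, t, hh⟩ := Module.FinitePresentation.exists_lift_of_isLocalizedModule S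
    (LocalizedModule.mkLinearMap S F) (σ.restrictScalars R ∘ₗ LocalizedModule.mkLinearMap S X)
  have hπh : LocalizedModule.mkLinearMap S X ∘ₗ (π ∘ₗ h) =
      LocalizedModule.mkLinearMap S X ∘ₗ ((t : R) • LinearMap.id) := by
    ext x
    have hhx : LocalizedModule.mk (h x) 1 = t • σ (LocalizedModule.mk x 1) := congr($hh x)
    have hσx : LocalizedModule.map S π (σ (LocalizedModule.mk x 1)) = LocalizedModule.mk x 1 :=
      congr($hσ (LocalizedModule.mk x 1))
    calc LocalizedModule.mk (π (h x)) 1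
        = LocalizedModule.map S π (LocalizedModule.mk (h x) 1) := (LocalizedModule.map_mk ..).symm
      _ = LocalizedModule.mk ((t : R) • x) 1 := by
        rw [hhx, LinearMap.map_smul_of_tower, hσx, Submonoid.smul_def, LocalizedModule.smul'_mk]
  obtain ⟨c, hc⟩ := Module.Finite.exists_smul_of_comp_eq_of_isLocalizedModule S
    (LocalizedModule.mkLinearMap S X) _ _ hπh
  refine ⟨c * t, mul_mem c.2 t.2, LinearMap.mem_splittingIdeal.mpr ⟨(c : R) • h, ?_⟩⟩
  ext x
  simpa [mul_smul, Submonoid.smul_def] using congr($hc x)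

end SplittingIdeal

theorem nonProjLocus_eq_setOf_splittingIdeal_le {R X : Type u} {F : Type*} [CommRing R]
    [AddCommGroup X] [Module R X] [Module.FinitePresentation R X] [AddCommGroup F] [Module R F]
    [Module.Projective R F] (π : F →ₗ[R] X) (hπ : Function.Surjective π) :
    nonProjLocus R X = {p | p.IsPrime ∧ π.splittingIdeal ≤ p} := by
  ext p
  refine ⟨fun ⟨hp, hnp⟩ ↦ ⟨hp, fun r hr ↦ ?_⟩, fun ⟨hp, hle⟩ ↦ ⟨hp, fun _ ↦ ?_⟩⟩
  · by_contra hrp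
    exact hnp (π.projective_localizedModule_of_mem_splittingIdeal hr hrp)
  · obtain ⟨r, hrp, hr⟩ := π.exists_mem_splittingIdeal_of_projective hπ p.primeCompl
    exact hrp (hle hr)

theorem isHomogeneous_splittingIdeal_linearCombination {ι R X κ : Type*} [DecidableEq ι]
    [AddCommGroup ι] [CommRing R] [AddCommGroup X] [Module R X] (𝒜 : ι → AddSubgroup R)
    [GradedRing 𝒜] {ℳ : ι → AddSubgroup X} [Decomposition ℳ] [SetLike.GradedSMul 𝒜 ℳ]
    [Fintype κ] {x : κ → X} (hx : ∀ i, SetLike.IsHomogeneousElem ℳ (x i)) :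
    (Fintype.linearCombination R x).splittingIdeal.IsHomogeneous 𝒜 := by
  choose d hd using hx
  intro j r hr
  obtain ⟨s, hs⟩ := LinearMap.mem_splittingIdeal.mp hr
  refine LinearMap.mem_splittingIdeal.mpr
    ⟨LinearMap.pi fun i ↦ (LinearMap.proj i ∘ₗ s).gradedComponent 𝒜 ℳ 𝒜 (j - d i), ?_⟩
  ext y
  induction y using Decomposition.inductionOn ℳ with
  | zero => simp
  | @homogeneous e y =>
    have hsy : ∑ i, s y i • x i = r • y := by
      simpa [Fintype.linearCombination_apply] using congr($hs y)
    calc _ = ∑ i, (decompose 𝒜 (s y i) (e + (j - d i)) : R) • x i := by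
          simp [Fintype.linearCombination_apply,
            LinearMap.gradedComponent_apply_of_mem _ _ _ _ _ y.2]
      _ = decompose ℳ (r • (y : X)) (e + j) := by
          simp only [← hsy, decompose_sum, DirectSum.sum_apply, AddSubmonoidClass.coe_finsetSum,
            coe_decompose_smul_of_right_mem 𝒜 (hd _)]
          exact Finset.sum_congr rfl fun i _ ↦ by rw [add_sub_assoc]
      _ = _ := by
          rw [coe_decompose_smul_of_right_mem 𝒜 y.2, add_sub_cancel_left]
          rfl
  | add y y' h h' => rw [map_add, map_add, h, h']

theorem minimal_nonProjLocus_isHomogeneous_general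
    (R : Type u) [CommRing R] [IsNoetherianRing R]
    (𝒜 : ℤ → AddSubgroup R) [GradedRing 𝒜]
    (X : Type u) [AddCommGroup X] [Module R X] [Module.Finite R X]
    (ℳ : ℤ → AddSubgroup X) [DirectSum.Decomposition ℳ] [SetLike.GradedSMul 𝒜 ℳ]
    (p : Ideal R) (hp : Minimal (· ∈ nonProjLocus R X) p) :
    p.IsHomogeneous 𝒜 := by
  obtain ⟨t, ht, hspan⟩ := exists_finset_isHomogeneousElem_span_eq_top (R := R) ℳ
  let π := Fintype.linearCombination R ((↑) : t → X)
  have hπ : Function.Surjective π := by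
    rw [← LinearMap.range_eq_top, Fintype.range_linearCombination, Subtype.range_coe, hspan]
  have : Module.FinitePresentation R X := Module.finitePresentation_of_finite R X
  rw [nonProjLocus_eq_setOf_splittingIdeal_le π hπ] at hp
  exact (isHomogeneous_splittingIdeal_linearCombination 𝒜 fun i : t ↦ ht i i.2).of_isMinimalPrime
    hp

/-- Let `R` be a commutative Noetherian `ℤ`-graded Gorenstein ring of Krull dimension one
with `R_i = 0` for `i < 0` and `R_0` a field, and let `X` be a finitely generated
`ℤ`-graded `R`-module.  Then every minimal element (with respect to inclusion) of the
non-projective locus `NP(X)` is a homogeneous prime ideal of `R`. -/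
theorem minimal_nonProjLocus_isHomogeneous
    (R : Type u) [CommRing R] [IsNoetherianRing R]
    (𝒜 : ℤ → AddSubgroup R) [GradedRing 𝒜]
    (hneg : ∀ i < 0, 𝒜 i = ⊥)
    (hfield : IsField (𝒜 0))
    (hGor : HasFiniteSelfInjDim R)
    (hdim : ringKrullDim R = 1)
    (X : Type u) [AddCommGroup X] [Module R X] [Module.Finite R X]
    (ℳ : ℤ → AddSubgroup X) [DirectSum.Decomposition ℳ] [SetLike.GradedSMul 𝒜 ℳ]
    (p : Ideal R) (hp : Minimal (· ∈ nonProjLocus R X) p) :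
    p.IsHomogeneous 𝒜 :=
  minimal_nonProjLocus_isHomogeneous_general R 𝒜 X ℳ p hp
end

section
/- Let k be a field and n ≥ 1, and let R = k[x, y]/(x^{2n+1} − y^2), graded with deg x = 2 and deg y = 2n+1 (so x^{2n+1} − y^2 is homogeneous of degree 4n+2). Then the graded k-algebra homomorphism k[x, y] → k[t, t^{-1}] determined by x ↦ t^2 and y ↦ t^{2n+1} (where deg t = 1) induces an isomorphism from the graded total quotient ring of R onto the Laurent polynomial ring k[t, t^{-1}]. -/
open MvPolynomial LaurentPolynomial

universe u

set_option synthInstance.maxHeartbeats 1000000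
set_option maxHeartbeats 1000000

variable {k : Type u} [Field k]

/-- The multiplicative submonoid of homogeneous non-zero-divisors of the quotient of
`k[x, y]` (graded by assigning weight `w 0` to `x` and `w 1` to `y`) by an ideal `I`:
an element of the quotient is homogeneous if it is the image of a weighted homogeneous
polynomial. -/
def homogeneousNZD (w : Fin 2 → ℕ) (I : Ideal (MvPolynomial (Fin 2) k)) :
    Submonoid (MvPolynomial (Fin 2) k ⧸ I) where
  carrier := {r | (∃ (n : ℕ) (p : MvPolynomial (Fin 2) k),
      p.IsWeightedHomogeneous w n ∧ Ideal.Quotient.mk I p = r) ∧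
    r ∈ nonZeroDivisors (MvPolynomial (Fin 2) k ⧸ I)}
  one_mem' := ⟨⟨0, 1, isWeightedHomogeneous_one k w, map_one _⟩, one_mem _⟩
  mul_mem' := by
    rintro a b ⟨⟨m, p, hp, rfl⟩, ha⟩ ⟨⟨n, q, hq, rfl⟩, hb⟩
    exact ⟨⟨m + n, p * q, hp.mul hq, map_mul _ _ _⟩, mul_mem ha hb⟩

/-- The graded total quotient ring of `(k[x,y], w)/I`: the localization at the submonoid of
homogeneous non-zero-divisors. -/
abbrev gradedTotalQuotient (w : Fin 2 → ℕ) (I : Ideal (MvPolynomial (Fin 2) k)) :=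
  Localization (homogeneousNZD w I)

/-! The parametrization `x ↦ t², y ↦ t^{2n+1}` has kernel exactly `(x^{2n+1} - y²)`: modulo
this ideal every polynomial is `p(x) + q(x) y`, whose image `p(t²) + q(t²) t^{2n+1}` splits into
an even and an odd part. So `R` embeds into `k[t, t⁻¹]`, and a homogeneous element of degree `m`
maps to a monomial `c t^m`, a unit unless the element is zero. The embedding therefore extends
injectively to the graded total quotient ring, and it is onto since `t = y / x^n` and
`t⁻¹ = x^n / y`. -/

theorem LaurentPolynomial.T_sum {R ι : Type*} [CommSemiring R] (s : Finset ι) (f : ι → ℤ) :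
    (T (∑ i ∈ s, f i) : R[T;T⁻¹]) = ∏ i ∈ s, T (f i) := by
  classical
  induction s using Finset.induction_on with
  | empty => simp [T_zero]
  | insert i s hi ih => rw [Finset.sum_insert hi, Finset.prod_insert hi, T_add, ih]

theorem MvPolynomial.exists_aeval_T_eq_C_mul_T {R σ : Type*} [CommSemiring R] {w : σ → ℕ}
    {m : ℕ} {p : MvPolynomial σ R} (hp : p.IsWeightedHomogeneous w m) :
    ∃ c : R, aeval (fun i ↦ (T (w i) : R[T;T⁻¹])) p = LaurentPolynomial.C c * T m := by
  induction hp using IsWeightedHomogeneous.induction_on with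
  | zero => exact ⟨0, by simp⟩
  | add p q _ _ hp hq =>
    obtain ⟨a, ha⟩ := hp
    obtain ⟨b, hb⟩ := hq
    exact ⟨a + b, by rw [map_add, ha, hb, map_add, add_mul]⟩
  | monomial d r hd =>
    refine ⟨r, ?_⟩
    rw [aeval_monomial, ← hd, Finsupp.weight_apply, LaurentPolynomial.C_eq_algebraMap,
      Finsupp.prod, Finsupp.sum]
    simp only [T_pow, smul_eq_mul, Nat.cast_sum, Nat.cast_mul, T_sum]

theorem IsLocalization.lift_injective_of_injective {R S P : Type*} [CommSemiring R]
    [CommSemiring S] [Algebra R S] [CommSemiring P] {M : Submonoid R} [IsLocalization M S]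
    {g : R →+* P} (hg : ∀ y : M, IsUnit (g y)) (hinj : Function.Injective g) :
    Function.Injective (lift hg : S → P) :=
  (lift_injective_iff hg).2 fun x y ↦
    ⟨fun h ↦ by simpa only [lift_eq] using congrArg (lift hg) h, fun h ↦ congrArg _ (hinj h)⟩

theorem LaurentPolynomial.subring_eq_top {R : Type*} [CommRing R] {S : Subring R[T;T⁻¹]}
    (hC : ∀ a, C a ∈ S) (hT : T 1 ∈ S) (hT' : T (-1) ∈ S) : S = ⊤ := by
  have hTm : ∀ m : ℤ, T m ∈ S := by
    intro m
    obtain ⟨m, rfl | rfl⟩ := m.eq_nat_or_neg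
    · simpa [T_pow] using pow_mem hT m
    · simpa [T_pow] using pow_mem hT' m
  refine (Subring.eq_top_iff' S).2 fun f ↦ ?_
  induction f using LaurentPolynomial.induction_on' with
  | add p q hp hq => exact add_mem hp hq
  | C_mul_T m a => exact mul_mem (hC a) (hTm m)

open Polynomial in
theorem Polynomial.eq_zero_of_expand_two_add_mul_X_pow_odd_eq_zero {R : Type*} [CommRing R]
    [IsDomain R] {p q : R[X]} {b : ℕ} (hb : Odd b)
    (h : expand R 2 p + expand R 2 q * X ^ b = 0) : p = 0 ∧ q = 0 := by
  by_cases hq : q = 0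
  · simpa [hq, expand_eq_zero two_pos] using h
  have hq' : expand R 2 q ≠ 0 := by rwa [Ne, expand_eq_zero two_pos]
  have hdeg := congrArg natDegree (eq_neg_of_add_eq_zero_left h)
  rw [natDegree_neg, natDegree_expand, natDegree_mul_X_pow _ hq', natDegree_expand] at hdeg
  obtain ⟨c, rfl⟩ := hb
  omega

theorem MvPolynomial.exists_sub_aeval_add_aeval_mul_X_one_mem_span {R : Type*} [CommRing R]
    (g : Polynomial R) (f : MvPolynomial (Fin 2) R) :
    ∃ p q : Polynomial R, f - (Polynomial.aeval (X 0) p + Polynomial.aeval (X 0) q * X 1) ∈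
      Ideal.span {Polynomial.aeval (X 0) g - X 1 ^ 2} := by
  simp_rw [← Ideal.Quotient.eq]
  set π := Ideal.Quotient.mk
    (Ideal.span {Polynomial.aeval (X 0 : MvPolynomial (Fin 2) R) g - X 1 ^ 2})
  have hy : π (X 1) ^ 2 = π (Polynomial.aeval (X 0) g) := by
    rw [← map_pow, eq_comm, Ideal.Quotient.eq]
    exact Ideal.subset_span rfl
  induction f using MvPolynomial.induction_on with
  | C a => exact ⟨Polynomial.C a, 0, by simp⟩
  | add f f' hf hf' =>
    obtain ⟨p, q, hpq⟩ := hf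
    obtain ⟨p', q', hpq'⟩ := hf'
    refine ⟨p + p', q + q', ?_⟩
    simp only [map_add, map_mul] at hpq hpq' ⊢
    rw [hpq, hpq']
    ring
  | mul_X f i hf =>
    obtain ⟨p, q, hpq⟩ := hf
    fin_cases i
    · refine ⟨Polynomial.X * p, Polynomial.X * q, ?_⟩
      simp only [map_add, map_mul, Polynomial.aeval_X, Fin.zero_eta] at hpq ⊢
      rw [hpq]
      ring
    · refine ⟨g * q, p, ?_⟩
      simp only [map_add, map_mul, Fin.mk_one] at hpq ⊢
      rw [hpq]
      linear_combination π (Polynomial.aeval (X 0) q) * hy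

noncomputable section

def cuspParam (n : ℕ) : MvPolynomial (Fin 2) k →ₐ[k] k[T;T⁻¹] :=
  aeval ![T 2, T (2 * n + 1)]

def cuspIdeal (n : ℕ) : Ideal (MvPolynomial (Fin 2) k) :=
  Ideal.span {X 0 ^ (2 * n + 1) - X 1 ^ 2}

variable (n : ℕ)

theorem cuspParam_eq_aeval_T :
    cuspParam (k := k) n = aeval fun i ↦ T (![2, 2 * n + 1] i : ℕ) := by
  unfold cuspParam
  congr 1
  funext i
  fin_cases i <;> simp

@[simp]
theorem cuspParam_X_zero : cuspParam n (X 0) = (T 2 : k[T;T⁻¹]) := by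
  simp [cuspParam]

@[simp]
theorem cuspParam_X_one : cuspParam n (X 1) = (T (2 * n + 1) : k[T;T⁻¹]) := by
  simp [cuspParam]

theorem cuspParam_aeval_X_zero (p : Polynomial k) :
    cuspParam n (Polynomial.aeval (X 0) p) = Polynomial.toLaurent (Polynomial.expand k 2 p) :=
  AlgHom.congr_fun (Polynomial.algHom_ext (f := (cuspParam n).comp (Polynomial.aeval (X 0)))
    (g := Polynomial.toLaurentAlg.comp (Polynomial.expand k 2)) (by simp)) p

theorem cuspIdeal_le_ker : cuspIdeal n ≤ RingHom.ker (cuspParam (k := k) n) := by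
  rw [cuspIdeal, Ideal.span_le, Set.singleton_subset_iff, SetLike.mem_coe, RingHom.mem_ker,
    map_sub, map_pow, map_pow, cuspParam_X_zero, cuspParam_X_one, T_pow, T_pow, sub_eq_zero]
  congr 1
  push_cast
  ring

theorem ker_cuspParam : RingHom.ker (cuspParam (k := k) n) = cuspIdeal n := by
  refine le_antisymm (fun f hf ↦ ?_) (cuspIdeal_le_ker n)
  obtain ⟨p, q, hpq⟩ :=
    exists_sub_aeval_add_aeval_mul_X_one_mem_span (Polynomial.X ^ (2 * n + 1)) f
  simp only [map_pow, Polynomial.aeval_X] at hpq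
  have hreduced : Polynomial.toLaurent (Polynomial.expand k 2 p +
      Polynomial.expand k 2 q * Polynomial.X ^ (2 * n + 1)) = 0 := by
    have h := cuspIdeal_le_ker n hpq
    rw [RingHom.mem_ker, map_sub, hf, zero_sub, neg_eq_zero] at h
    simpa only [map_add, map_mul, cuspParam_aeval_X_zero, cuspParam_X_one,
      Polynomial.toLaurent_X_pow, Nat.cast_add, Nat.cast_mul, Nat.cast_ofNat, Nat.cast_one] using h
  obtain ⟨rfl, rfl⟩ := Polynomial.eq_zero_of_expand_two_add_mul_X_pow_odd_eq_zero
    (odd_two_mul_add_one n) (Polynomial.toLaurent_eq_zero.1 hreduced)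
  simpa [cuspIdeal] using hpq

def cuspEmbedding : MvPolynomial (Fin 2) k ⧸ cuspIdeal n →+* k[T;T⁻¹] :=
  Ideal.Quotient.lift _ (cuspParam n).toRingHom fun _ ha ↦ cuspIdeal_le_ker n ha

theorem cuspEmbedding_mk (p : MvPolynomial (Fin 2) k) :
    cuspEmbedding n (Ideal.Quotient.mk _ p) = cuspParam n p :=
  Ideal.Quotient.lift_mk _ _ _

theorem cuspEmbedding_injective : Function.Injective (cuspEmbedding (k := k) n) :=
  RingHom.lift_injective_of_ker_le_ideal _ _ (ker_cuspParam n).le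

instance : IsDomain (MvPolynomial (Fin 2) k ⧸ cuspIdeal n) :=
  (cuspEmbedding_injective n).isDomain _

theorem isUnit_cuspEmbedding {s : MvPolynomial (Fin 2) k ⧸ cuspIdeal n}
    (hs : s ∈ homogeneousNZD ![2, 2 * n + 1] (cuspIdeal n)) : IsUnit (cuspEmbedding n s) := by
  obtain ⟨⟨m, p, hp, rfl⟩, hs⟩ := hs
  obtain ⟨c, hc⟩ := exists_aeval_T_eq_C_mul_T hp
  rw [cuspEmbedding_mk, cuspParam_eq_aeval_T, hc]
  refine ((isUnit_iff_ne_zero.2 fun hc0 ↦ ?_).map LaurentPolynomial.C).mul (isUnit_T _)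
  refine nonZeroDivisors.ne_zero hs (cuspEmbedding_injective n ?_)
  rw [map_zero, cuspEmbedding_mk, cuspParam_eq_aeval_T, hc, hc0, map_zero, zero_mul]

theorem mk_mem_homogeneousNZD {p : MvPolynomial (Fin 2) k} {m : ℕ}
    (hp : p.IsWeightedHomogeneous ![2, 2 * n + 1] m) (hp0 : cuspParam n p ≠ 0) :
    Ideal.Quotient.mk _ p ∈ homogeneousNZD ![2, 2 * n + 1] (cuspIdeal n) :=
  ⟨⟨m, p, hp, rfl⟩, mem_nonZeroDivisors_of_ne_zero fun h ↦ hp0 <| by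
    rw [← cuspEmbedding_mk, h, map_zero]⟩

def gradedTotalQuotientToLaurent :
    gradedTotalQuotient (k := k) ![2, 2 * n + 1] (cuspIdeal n) →+* k[T;T⁻¹] :=
  IsLocalization.lift (S := gradedTotalQuotient (k := k) ![2, 2 * n + 1] (cuspIdeal n))
    fun s : homogeneousNZD _ _ ↦ isUnit_cuspEmbedding n s.2

theorem gradedTotalQuotientToLaurent_algebraMap (p : MvPolynomial (Fin 2) k) :
    gradedTotalQuotientToLaurent n (algebraMap _ _ (Ideal.Quotient.mk (cuspIdeal n) p)) =
      cuspParam n p := by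
  rw [gradedTotalQuotientToLaurent, IsLocalization.lift_eq, cuspEmbedding_mk]

theorem gradedTotalQuotientToLaurent_injective :
    Function.Injective (gradedTotalQuotientToLaurent (k := k) n) :=
  IsLocalization.lift_injective_of_injective _ (cuspEmbedding_injective n)

theorem gradedTotalQuotientToLaurent_surjective :
    Function.Surjective (gradedTotalQuotientToLaurent (k := k) n) := by
  have hx :
      Ideal.Quotient.mk _ (X 0 ^ n) ∈ homogeneousNZD (k := k) ![2, 2 * n + 1] (cuspIdeal n) :=
    mk_mem_homogeneousNZD n ((isWeightedHomogeneous_X k _ 0).pow n)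
      (by simp [T_pow, (isUnit_T _).ne_zero])
  have hy : Ideal.Quotient.mk _ (X 1) ∈ homogeneousNZD (k := k) ![2, 2 * n + 1] (cuspIdeal n) :=
    mk_mem_homogeneousNZD n (isWeightedHomogeneous_X k _ 1) (by simp [(isUnit_T _).ne_zero])
  refine RingHom.range_eq_top.1 <| subring_eq_top
    (fun a ↦ ⟨algebraMap _ _ (Ideal.Quotient.mk (cuspIdeal n) (MvPolynomial.C a)), ?_⟩)
    ⟨IsLocalization.mk' _ (Ideal.Quotient.mk _ (X 1)) ⟨_, hx⟩, ?_⟩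
    ⟨IsLocalization.mk' _ (Ideal.Quotient.mk _ (X 0 ^ n)) ⟨_, hy⟩, ?_⟩
  · simp [gradedTotalQuotientToLaurent_algebraMap, cuspParam]
  all_goals
    refine (IsLocalization.lift_mk'_spec _ _ _ _).2 ?_
    simp only [cuspEmbedding_mk, map_pow, cuspParam_X_zero, cuspParam_X_one, T_pow, ← T_add]
    congr 1
    ring

end

theorem gradedTotalQuotient_A_even_general (n : ℕ)
    (I : Ideal (MvPolynomial (Fin 2) k))
    (hI : I = Ideal.span {(X 0 : MvPolynomial (Fin 2) k) ^ (2 * n + 1) - X 1 ^ 2}) :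
    ∃ e : gradedTotalQuotient (k := k) ![2, 2 * n + 1] I ≃+* LaurentPolynomial k,
      ∀ p : MvPolynomial (Fin 2) k,
        e (algebraMap (MvPolynomial (Fin 2) k ⧸ I)
            (gradedTotalQuotient (k := k) ![2, 2 * n + 1] I) (Ideal.Quotient.mk I p)) =
          aeval ![T 2, T (2 * n + 1)] p := by
  subst hI
  exact ⟨RingEquiv.ofBijective (gradedTotalQuotientToLaurent n)
      ⟨gradedTotalQuotientToLaurent_injective n, gradedTotalQuotientToLaurent_surjective n⟩,
    gradedTotalQuotientToLaurent_algebraMap n⟩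

/-- Let `k` be a field, `n ≥ 1`, and `R = k[x, y]/(x^{2n+1} − y²)` graded with
`deg x = 2`, `deg y = 2n+1`.  The graded `k`-algebra homomorphism `k[x, y] → k[t, t⁻¹]`
with `x ↦ t²`, `y ↦ t^{2n+1}` induces an isomorphism from the graded total quotient ring
of `R` onto the Laurent polynomial ring `k[t, t⁻¹]`. -/
theorem gradedTotalQuotient_A_even (n : ℕ) (hn : 1 ≤ n)
    (I : Ideal (MvPolynomial (Fin 2) k))
    (hI : I = Ideal.span {(X 0 : MvPolynomial (Fin 2) k) ^ (2 * n + 1) - X 1 ^ 2}) :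
    ∃ e : gradedTotalQuotient (k := k) ![2, 2 * n + 1] I ≃+* LaurentPolynomial k,
      ∀ p : MvPolynomial (Fin 2) k,
        e (algebraMap (MvPolynomial (Fin 2) k ⧸ I)
            (gradedTotalQuotient (k := k) ![2, 2 * n + 1] I) (Ideal.Quotient.mk I p)) =
          aeval ![T 2, T (2 * n + 1)] p :=
  gradedTotalQuotient_A_even_general n I hI
end

section
/- Let k be a field and let R = k[x, y]/(x^5 − y^3), graded with deg x = 3 and deg y = 5 (so x^5 − y^3 is homogeneous of degree 15). Then the graded k-algebra homomorphism k[x, y] → k[t, t^{-1}] determined by x ↦ t^3 and y ↦ t^5 (where deg t = 1) induces an isomorphism from the graded total quotient ring of R onto the Laurent polynomial ring k[t, t^{-1}]. -/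
open MvPolynomial LaurentPolynomial

universe u

set_option synthInstance.maxHeartbeats 1000000
set_option maxHeartbeats 1000000

variable {k : Type u} [Field k]

/-!
The map `x ↦ t ^ q`, `y ↦ t ^ p` identifies `k[x, y]/(x ^ p - y ^ q)` with `k[t ^ q, t ^ p]` when
`p` and `q` are coprime: modulo `y ^ q = x ^ p` every polynomial is congruent to one of `y`-degree
`< q`, and the monomials `x ^ a * y ^ b` with `b < q` have pairwise distinct weights `q a + p b`.
A weighted homogeneous element is sent to some `c t ^ n`, a unit as soon as it is nonzero, so the
map extends injectively to the graded total quotient ring. Its image contains `t ^ (± q)` and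
`t ^ (± p)`, as `x` and `y` are homogeneous non-zero-divisors, hence every `t ^ n` by Bézout.
-/

namespace LaurentPolynomial

theorem prod_T {R ι : Type*} [CommSemiring R] (s : Finset ι) (f : ι → ℤ) :
    ∏ i ∈ s, (T (f i) : R[T;T⁻¹]) = T (∑ i ∈ s, f i) := by
  classical
  induction s using Finset.induction_on with
  | empty => simp [T_zero]
  | insert a s ha ih => rw [Finset.prod_insert ha, Finset.sum_insert ha, ih, T_add]

variable {R : Type*} [CommRing R]

theorem T_mem_of_isCoprime {A : Subring R[T;T⁻¹]} {a b : ℤ} (hab : IsCoprime a b)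
    (ha : T a ∈ A) (ha' : T (-a) ∈ A) (hb : T b ∈ A) (hb' : T (-b) ∈ A) (n : ℤ) : T n ∈ A := by
  let H : AddSubgroup ℤ :=
    { carrier := {n | T n ∈ A ∧ T (-n) ∈ A}
      zero_mem' := by simp [T_zero, A.one_mem]
      add_mem' := fun hm hn => ⟨by rw [T_add]; exact A.mul_mem hm.1 hn.1,
        by rw [neg_add, T_add]; exact A.mul_mem hm.2 hn.2⟩
      neg_mem' := fun hn => by simpa [and_comm] using hn }
  obtain ⟨u, v, huv⟩ := hab
  have h1 : (1 : ℤ) ∈ H := huv ▸ H.add_mem (H.zsmul_mem ⟨ha, ha'⟩ u) (H.zsmul_mem ⟨hb, hb'⟩ v)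
  simpa using (H.zsmul_mem h1 n).1

theorem subring_eq_top_s10 {A : Subring R[T;T⁻¹]} (hC : ∀ c, C c ∈ A) (hT : ∀ n, T n ∈ A) :
    A = ⊤ :=
  eq_top_iff.mpr fun f _ =>
    f.induction_on' (fun _ _ => A.add_mem) fun n c => A.mul_mem (hC c) (hT n)

end LaurentPolynomial

namespace MvPolynomial

variable {R σ : Type*} [CommSemiring R]

theorem aeval_T_monomial (w : σ → ℕ) (m : σ →₀ ℕ) (c : R) :
    aeval (fun i => T (w i : ℤ)) (monomial m c) =
      LaurentPolynomial.C c * T (Finsupp.weight w m : ℤ) := by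
  rw [aeval_monomial, Finsupp.weight_apply, Finsupp.prod, Finsupp.sum]
  simp only [T_pow, prod_T]
  push_cast
  simp [mul_comm]

theorem aeval_T_eq_sum (w : σ → ℕ) (p : MvPolynomial σ R) :
    aeval (fun i => T (w i : ℤ)) p =
      ∑ m ∈ p.support, LaurentPolynomial.C (coeff m p) * T (Finsupp.weight w m : ℤ) := by
  conv_lhs => rw [p.as_sum]
  simp only [map_sum, aeval_T_monomial]

theorem coeff_aeval_T_weight {w : σ → ℕ} {p : MvPolynomial σ R}
    (hinj : Set.InjOn (Finsupp.weight w) (p.support : Set (σ →₀ ℕ)))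
    {m : σ →₀ ℕ} (hm : m ∈ p.support) :
    (aeval (fun i => T (w i : ℤ)) p).coeff (Finsupp.weight w m : ℤ) = coeff m p := by
  classical
  simp only [aeval_T_eq_sum, ← single_eq_C_mul_T, AddMonoidAlgebra.coeff_sum,
    AddMonoidAlgebra.coeff_single, Finset.sum_apply', Finsupp.single_apply, Nat.cast_inj]
  rw [Finset.sum_eq_single m (fun m' hm' hne => if_neg fun h => hne (hinj hm' hm h)) (absurd hm),
    if_pos rfl]

theorem eq_zero_of_aeval_T_eq_zero {w : σ → ℕ} {p : MvPolynomial σ R}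
    (hinj : Set.InjOn (Finsupp.weight w) (p.support : Set (σ →₀ ℕ)))
    (h : aeval (fun i => (T (w i : ℤ) : R[T;T⁻¹])) p = 0) : p = 0 := by
  ext m
  by_contra hm
  rw [← coeff_aeval_T_weight hinj (mem_support_iff.mpr hm), h] at hm
  exact hm rfl

theorem IsWeightedHomogeneous.aeval_T {w : σ → ℕ} {p : MvPolynomial σ R} {n : ℕ}
    (hp : p.IsWeightedHomogeneous w n) :
    ∃ c : R, aeval (fun i => T (w i : ℤ)) p = LaurentPolynomial.C c * T n := by
  refine ⟨∑ m ∈ p.support, coeff m p, ?_⟩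
  rw [aeval_T_eq_sum, map_sum, Finset.sum_mul]
  exact Finset.sum_congr rfl fun m hm => by rw [hp (mem_support_iff.mp hm)]

end MvPolynomial

namespace IsLocalization

variable {R S P : Type*} [CommRing R] [CommRing S] [CommRing P] [Algebra R S] {M : Submonoid R}
  [IsLocalization M S] {g : R →+* P} (hg : ∀ y : M, IsUnit (g y))

theorem lift_injective_of_injective_s10 (hinj : Function.Injective g) :
    Function.Injective (lift hg : S → P) :=
  (lift_injective_iff hg).mpr fun x y =>
    ⟨fun h => by simpa only [lift_eq] using congrArg (lift hg) h, fun h => congrArg _ (hinj h)⟩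

theorem mem_range_lift_of_mul_eq_one {y : M} {v : P} (hv : g y * v = 1) :
    v ∈ (lift hg : S →+* P).range :=
  ⟨mk' S 1 y, (lift_mk'_spec (hg := hg) 1 v y).mpr (by rw [map_one, hv])⟩

end IsLocalization

section MonomialCurve

variable {R : Type*} [CommRing R] {p q : ℕ}

variable (R p q) in
noncomputable def monomialCurveIdeal : Ideal (MvPolynomial (Fin 2) R) :=
  Ideal.span {X 0 ^ p - X 1 ^ q}

theorem monomial_eq_C_mul_X_zero_pow_mul_X_one_pow (m : Fin 2 →₀ ℕ) (c : R) :
    monomial m c = MvPolynomial.C c * X 0 ^ m 0 * X 1 ^ m 1 := by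
  rw [monomial_eq, Finsupp.prod_fintype _ _ fun _ => pow_zero _, Fin.prod_univ_two, mul_assoc]

theorem exists_mem_restrictSupport_mk_eq (hq : 0 < q) (f : MvPolynomial (Fin 2) R) :
    ∃ g ∈ restrictSupport R {m | m 1 < q},
      Ideal.Quotient.mk (monomialCurveIdeal R p q) f = Ideal.Quotient.mk _ g := by
  set π := Ideal.Quotient.mk (monomialCurveIdeal R p q)
  have hπ : π (X 1) ^ q = π (X 0) ^ p := by
    rw [← map_pow, ← map_pow, eq_comm, Ideal.Quotient.mk_eq_mk_iff_sub_mem]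
    exact Ideal.subset_span rfl
  induction f using MvPolynomial.induction_on' with
  | monomial m c =>
    refine ⟨monomial (Finsupp.single 0 (m 0 + p * (m 1 / q)) + Finsupp.single 1 (m 1 % q)) c,
      (monomial_mem_restrictSupport R).mpr (Or.inl ?_), ?_⟩
    · simpa using Nat.mod_lt _ hq
    · rw [monomial_eq_C_mul_X_zero_pow_mul_X_one_pow, monomial_eq_C_mul_X_zero_pow_mul_X_one_pow]
      simp only [map_mul, map_pow, Finsupp.add_apply, Finsupp.single_eq_same,
        Finsupp.single_eq_of_ne (show (0 : Fin 2) ≠ 1 by decide),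
        Finsupp.single_eq_of_ne (show (1 : Fin 2) ≠ 0 by decide), add_zero, zero_add]
      conv_lhs => rw [← Nat.div_add_mod (m 1) q, pow_add, pow_mul, hπ, ← pow_mul]
      ring
  | add f g hf hg =>
    obtain ⟨f', hf', hff'⟩ := hf
    obtain ⟨g', hg', hgg'⟩ := hg
    exact ⟨f' + g', add_mem hf' hg', by rw [map_add, map_add, hff', hgg']⟩

theorem weight_fin_two (m : Fin 2 →₀ ℕ) : Finsupp.weight ![q, p] m = m 0 * q + m 1 * p := by
  simp [Finsupp.weight_apply, Finsupp.sum_fintype, Fin.sum_univ_two]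

theorem injOn_weight_of_coprime (hpq : p.Coprime q) :
    Set.InjOn (Finsupp.weight ![q, p]) {m : Fin 2 →₀ ℕ | m 1 < q} := by
  intro m hm m' hm' h
  rw [weight_fin_two, weight_fin_two] at h
  have h1 : m 1 = m' 1 := by
    refine Nat.ModEq.eq_of_lt_of_lt (Nat.ModEq.cancel_right_of_coprime hpq.symm ?_) hm hm'
    simpa [Nat.ModEq, Nat.add_mod] using congrArg (· % q) h
  have h0 : m 0 = m' 0 := by
    rw [h1, Nat.add_right_cancel_iff] at h
    exact Nat.eq_of_mul_eq_mul_right (by simp at hm; omega) h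
  ext i
  fin_cases i
  exacts [h0, h1]

theorem vecCons_T_eq :
    ![(T q : R[T;T⁻¹]), T p] = fun i => T (![q, p] i : ℤ) := by
  ext i : 1
  fin_cases i <;> rfl

theorem monomialCurveIdeal_le_ker :
    monomialCurveIdeal R p q ≤ RingHom.ker (aeval ![(T q : R[T;T⁻¹]), T p]) := by
  rw [monomialCurveIdeal, Ideal.span_le, Set.singleton_subset_iff]
  simp [T_pow, mul_comm]

theorem ker_aeval_T (hq : 0 < q) (hpq : p.Coprime q) :
    RingHom.ker (aeval ![(T q : R[T;T⁻¹]), T p]) = monomialCurveIdeal R p q := by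
  refine le_antisymm (fun f hf => ?_) monomialCurveIdeal_le_ker
  obtain ⟨g, hg, hfg⟩ := exists_mem_restrictSupport_mk_eq hq f
  rw [Ideal.Quotient.mk_eq_mk_iff_sub_mem] at hfg
  have hg0 : g = 0 := by
    refine eq_zero_of_aeval_T_eq_zero ((injOn_weight_of_coprime hpq).mono hg) ?_
    have := monomialCurveIdeal_le_ker hfg
    rwa [RingHom.mem_ker, map_sub, RingHom.mem_ker.mp hf, zero_sub, neg_eq_zero,
      vecCons_T_eq] at this
  simpa [hg0] using hfg

variable (p q) in
noncomputable def monomialCurveMap :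
    MvPolynomial (Fin 2) R ⧸ monomialCurveIdeal R p q →+* R[T;T⁻¹] :=
  Ideal.Quotient.lift _ (aeval ![T q, T p]).toRingHom fun _ hf => monomialCurveIdeal_le_ker hf

@[simp]
theorem monomialCurveMap_mk (f : MvPolynomial (Fin 2) R) :
    monomialCurveMap p q (Ideal.Quotient.mk _ f) = aeval ![(T q : R[T;T⁻¹]), T p] f :=
  Ideal.Quotient.lift_mk _ _ _

theorem monomialCurveMap_mk_X_zero :
    monomialCurveMap p q (Ideal.Quotient.mk _ (X 0)) = (T q : R[T;T⁻¹]) := by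
  simp

theorem monomialCurveMap_mk_X_one :
    monomialCurveMap p q (Ideal.Quotient.mk _ (X 1)) = (T p : R[T;T⁻¹]) := by
  simp

theorem monomialCurveMap_injective (hq : 0 < q) (hpq : p.Coprime q) :
    Function.Injective (monomialCurveMap (R := R) p q) :=
  (Ideal.injective_lift_iff _).mpr (ker_aeval_T hq hpq)

theorem isUnit_monomialCurveMap (hq : 0 < q) (hpq : p.Coprime q)
    {s : MvPolynomial (Fin 2) k ⧸ monomialCurveIdeal k p q}
    (hs : s ∈ homogeneousNZD ![q, p] (monomialCurveIdeal k p q)) :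
    IsUnit (monomialCurveMap p q s) := by
  obtain ⟨⟨n, f, hf, rfl⟩, hnzd⟩ := hs
  obtain ⟨c, hc⟩ := hf.aeval_T
  rw [← vecCons_T_eq] at hc
  have := (monomialCurveMap (R := k) p q).domain_nontrivial
  have hc0 : c ≠ 0 := by
    rintro rfl
    refine nonZeroDivisors.ne_zero hnzd (monomialCurveMap_injective hq hpq ?_)
    rw [monomialCurveMap_mk, hc, map_zero, zero_mul, map_zero]
  rw [monomialCurveMap_mk, hc]
  exact ((isUnit_iff_ne_zero.mpr hc0).map LaurentPolynomial.C).mul (isUnit_T n)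

theorem mk_mem_homogeneousNZD_s10 (hq : 0 < q) (hpq : p.Coprime q) {f : MvPolynomial (Fin 2) k}
    {n : ℕ} (hf : f.IsWeightedHomogeneous ![q, p] n)
    (hu : IsUnit (monomialCurveMap p q (Ideal.Quotient.mk _ f))) :
    Ideal.Quotient.mk _ f ∈ homogeneousNZD ![q, p] (monomialCurveIdeal k p q) :=
  ⟨⟨n, f, hf, rfl⟩,
    mem_nonZeroDivisors_of_injective (monomialCurveMap_injective hq hpq) hu.mem_nonZeroDivisors⟩

theorem lift_monomialCurveMap_surjective (hq : 0 < q) (hpq : p.Coprime q)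
    (hunit : ∀ s : homogeneousNZD ![q, p] (monomialCurveIdeal k p q),
      IsUnit (monomialCurveMap (R := k) p q s)) :
    Function.Surjective
      (IsLocalization.lift (S := gradedTotalQuotient ![q, p] (monomialCurveIdeal k p q))
        hunit) := by
  set K := gradedTotalQuotient ![q, p] (monomialCurveIdeal k p q)
  set ψ := IsLocalization.lift (S := K) hunit
  have hmem (f : MvPolynomial (Fin 2) k) : monomialCurveMap p q (Ideal.Quotient.mk _ f) ∈ ψ.range :=
    ⟨_, IsLocalization.lift_eq hunit _⟩
  have hC (c : k) : LaurentPolynomial.C c ∈ ψ.range := by simpa using hmem (MvPolynomial.C c)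
  have hTq : T q ∈ ψ.range := by simpa using hmem (X 0)
  have hTp : T p ∈ ψ.range := by simpa using hmem (X 1)
  have hx := mk_mem_homogeneousNZD_s10 hq hpq (isWeightedHomogeneous_X k _ 0)
    (by rw [monomialCurveMap_mk_X_zero]; exact isUnit_T _)
  have hy := mk_mem_homogeneousNZD_s10 hq hpq (isWeightedHomogeneous_X k _ 1)
    (by rw [monomialCurveMap_mk_X_one]; exact isUnit_T _)
  have hTq' : T (-q) ∈ ψ.range :=
    IsLocalization.mem_range_lift_of_mul_eq_one (S := K) hunit (y := ⟨_, hx⟩) (v := T (-q)) (by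
      rw [monomialCurveMap_mk_X_zero, ← T_add, add_neg_cancel, T_zero])
  have hTp' : T (-p) ∈ ψ.range :=
    IsLocalization.mem_range_lift_of_mul_eq_one (S := K) hunit (y := ⟨_, hy⟩) (v := T (-p)) (by
      rw [monomialCurveMap_mk_X_one, ← T_add, add_neg_cancel, T_zero])
  exact RingHom.range_eq_top.mp <| subring_eq_top_s10 hC <|
    T_mem_of_isCoprime (Nat.isCoprime_iff_coprime.mpr hpq.symm) hTq hTq' hTp hTp'

theorem exists_ringEquiv_gradedTotalQuotient (hq : 0 < q) (hpq : p.Coprime q) :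
    ∃ e : gradedTotalQuotient ![q, p] (monomialCurveIdeal k p q) ≃+* k[T;T⁻¹],
      ∀ f : MvPolynomial (Fin 2) k,
        e (algebraMap _ _ (Ideal.Quotient.mk (monomialCurveIdeal k p q) f)) =
          aeval ![(T q : k[T;T⁻¹]), T p] f := by
  have hunit (s : homogeneousNZD ![q, p] (monomialCurveIdeal k p q)) :
      IsUnit (monomialCurveMap (R := k) p q s) := isUnit_monomialCurveMap (k := k) hq hpq s.2
  exact ⟨.ofBijective (IsLocalization.lift hunit)
    ⟨IsLocalization.lift_injective_of_injective_s10 hunit (monomialCurveMap_injective hq hpq),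
      lift_monomialCurveMap_surjective hq hpq hunit⟩,
    fun f => (IsLocalization.lift_eq hunit _).trans (monomialCurveMap_mk f)⟩

end MonomialCurve

/-- Let `k` be a field and `R = k[x, y]/(x⁵ − y³)` graded with `deg x = 3`, `deg y = 5`.
The graded `k`-algebra homomorphism `k[x, y] → k[t, t⁻¹]` with `x ↦ t³`, `y ↦ t⁵`
induces an isomorphism from the graded total quotient ring of `R` onto the Laurent
polynomial ring `k[t, t⁻¹]`. -/
theorem gradedTotalQuotient_E8
    (I : Ideal (MvPolynomial (Fin 2) k))
    (hI : I = Ideal.span {(X 0 : MvPolynomial (Fin 2) k) ^ 5 - X 1 ^ 3}) :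
    ∃ e : gradedTotalQuotient (k := k) ![3, 5] I ≃+* LaurentPolynomial k,
      ∀ p : MvPolynomial (Fin 2) k,
        e (algebraMap (MvPolynomial (Fin 2) k ⧸ I)
            (gradedTotalQuotient (k := k) ![3, 5] I) (Ideal.Quotient.mk I p)) =
          aeval ![T 3, T 5] p := by
  subst hI
  exact_mod_cast exists_ringEquiv_gradedTotalQuotient (p := 5) (q := 3) (by norm_num) (by norm_num)
end
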